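/- arXiv:1402.6600 — 6 statements merged into one kernel-verified Lean document; each statement's English description precedes it below -/
import Mathlib

section
/- Let φ : ℝ³ → ℝ be 1-Lipschitz, let δ > 0, let p₁, p₂ ∈ ℝ³ and let θ₁, θ₂ ∈ ℝ³ be unit vectors such that for i = 1, 2 one has φ(pᵢ + δ·θᵢ) = φ(pᵢ) + δ and φ(pᵢ − δ·θᵢ) = φ(pᵢ) − δ. Then δ²·‖θ₁ − θ₂‖² ≤ ‖p₁ − p₂‖² − (φ(p₁) − φ(p₂))². -/
/-! Compare `φ` at the far endpoints of the two segments: `φ` rises by `c + 2δ` from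
`p₂ - δθ₂` to `p₁ + δθ₁` and falls by `2δ - c` from `p₂ + δθ₂` to `p₁ - δθ₁`, where
`c = φ p₁ - φ p₂`. Adding the squares of the two Lipschitz bounds, the parallelogram law
gives `c² + 4δ² ≤ ‖p₁ - p₂‖² + δ²‖θ₁ + θ₂‖²`, and for unit vectors
`‖θ₁ + θ₂‖² = 4 - ‖θ₁ - θ₂‖²`. -/

local notation "ℝ³" => EuclideanSpace ℝ (Fin 3)

theorem sq_add_sq_le_norm_sq_add_norm_sq {E : Type*} [NormedAddCommGroup E]
    [InnerProductSpace ℝ E] {a w : E} {c s : ℝ}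
    (hadd : |c + s| ≤ ‖a + w‖) (hsub : |c - s| ≤ ‖a - w‖) :
    c ^ 2 + s ^ 2 ≤ ‖a‖ ^ 2 + ‖w‖ ^ 2 := by
  have hadd2 : (c + s) ^ 2 ≤ ‖a + w‖ ^ 2 := sq_le_sq' (abs_le.mp hadd).1 (abs_le.mp hadd).2
  have hsub2 : (c - s) ^ 2 ≤ ‖a - w‖ ^ 2 := sq_le_sq' (abs_le.mp hsub).1 (abs_le.mp hsub).2
  have hpar := parallelogram_law_with_norm ℝ a w
  nlinarith

theorem stmt_0_general (φ : ℝ³ → ℝ) (hφ : ∀ x y : ℝ³, |φ x - φ y| ≤ ‖x - y‖)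
    (δ : ℝ) (p₁ p₂ θ₁ θ₂ : ℝ³)
    (hθ₁ : ‖θ₁‖ = 1) (hθ₂ : ‖θ₂‖ = 1)
    (h1p : φ (p₁ + δ • θ₁) = φ p₁ + δ) (h1m : φ (p₁ - δ • θ₁) = φ p₁ - δ)
    (h2p : φ (p₂ + δ • θ₂) = φ p₂ + δ) (h2m : φ (p₂ - δ • θ₂) = φ p₂ - δ) :
    δ ^ 2 * ‖θ₁ - θ₂‖ ^ 2 ≤ ‖p₁ - p₂‖ ^ 2 - (φ p₁ - φ p₂) ^ 2 := by
  have hrise : |(φ p₁ - φ p₂) + 2 * δ| ≤ ‖(p₁ - p₂) + δ • (θ₁ + θ₂)‖ := by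
    have h := hφ (p₁ + δ • θ₁) (p₂ - δ • θ₂)
    rw [h1p, h2m] at h
    convert h using 2 <;> [ring; module]
  have hfall : |(φ p₁ - φ p₂) - 2 * δ| ≤ ‖(p₁ - p₂) - δ • (θ₁ + θ₂)‖ := by
    have h := hφ (p₁ - δ • θ₁) (p₂ + δ • θ₂)
    rw [h1m, h2p] at h
    convert h using 2 <;> [ring; module]
  have key := sq_add_sq_le_norm_sq_add_norm_sq hrise hfall
  have hpar := parallelogram_law_with_norm ℝ θ₁ θ₂
  simp only [norm_smul, Real.norm_eq_abs, mul_pow, sq_abs] at key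
  rw [hθ₁, hθ₂] at hpar
  nlinarith

theorem stmt_0 (φ : ℝ³ → ℝ) (hφ : ∀ x y : ℝ³, |φ x - φ y| ≤ ‖x - y‖)
    (δ : ℝ) (hδ : 0 < δ) (p₁ p₂ θ₁ θ₂ : ℝ³)
    (hθ₁ : ‖θ₁‖ = 1) (hθ₂ : ‖θ₂‖ = 1)
    (h1p : φ (p₁ + δ • θ₁) = φ p₁ + δ) (h1m : φ (p₁ - δ • θ₁) = φ p₁ - δ)
    (h2p : φ (p₂ + δ • θ₂) = φ p₂ + δ) (h2m : φ (p₂ - δ • θ₂) = φ p₂ - δ) :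
    δ ^ 2 * ‖θ₁ - θ₂‖ ^ 2 ≤ ‖p₁ - p₂‖ ^ 2 - (φ p₁ - φ p₂) ^ 2 :=
  stmt_0_general φ hφ δ p₁ p₂ θ₁ θ₂ hθ₁ hθ₂ h1p h1m h2p h2m
end

section
/- Let φ : ℝ³ → ℝ be 1-Lipschitz, let δ > 0, let p₁, p₂ ∈ ℝ³ and let θ₁, θ₂ ∈ ℝ³ be unit vectors such that for i = 1, 2 one has φ(pᵢ + δ·θᵢ) = φ(pᵢ) + δ and φ(pᵢ − δ·θᵢ) = φ(pᵢ) − δ. Then ‖θ₁ − θ₂‖ ≤ (1/δ)·‖p₁ − p₂‖. -/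
/-! Since `φ` is 1-Lipschitz, comparing the far endpoints of the two rays gives
`φ p₁ - φ p₂ + 2δ ≤ ‖a + s‖` and `φ p₂ - φ p₁ + 2δ ≤ ‖a - s‖`, where `a = p₁ - p₂` and
`s = δ (θ₁ + θ₂)`, so `4δ ≤ ‖a + s‖ + ‖a - s‖`. The parallelogram law bounds the square of the
right side by `4 (‖a‖² + ‖s‖²)`, and for unit vectors `‖θ₁ + θ₂‖² = 4 - ‖θ₁ - θ₂‖²`.
Together these give `δ² ‖θ₁ - θ₂‖² ≤ ‖a‖²`. -/

section RayDirections

variable {E : Type*}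

theorem four_mul_le_norm_add_add_norm_sub_of_rays [SeminormedAddCommGroup E] [Module ℝ E]
    {φ : E → ℝ} (hφ : ∀ x y : E, |φ x - φ y| ≤ ‖x - y‖) {δ : ℝ} {p₁ p₂ θ₁ θ₂ : E}
    (h1p : φ (p₁ + δ • θ₁) = φ p₁ + δ) (h1m : φ (p₁ - δ • θ₁) = φ p₁ - δ)
    (h2p : φ (p₂ + δ • θ₂) = φ p₂ + δ) (h2m : φ (p₂ - δ • θ₂) = φ p₂ - δ) :
    4 * δ ≤ ‖p₁ - p₂ + δ • (θ₁ + θ₂)‖ + ‖p₁ - p₂ - δ • (θ₁ + θ₂)‖ := by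
  have forward : φ p₁ - φ p₂ + 2 * δ ≤ ‖p₁ - p₂ + δ • (θ₁ + θ₂)‖ := by
    have h := (abs_le.mp (hφ (p₁ + δ • θ₁) (p₂ - δ • θ₂))).2
    rw [h1p, h2m, show p₁ + δ • θ₁ - (p₂ - δ • θ₂) = p₁ - p₂ + δ • (θ₁ + θ₂) by
      rw [smul_add]; abel] at h
    linarith
  have backward : φ p₂ - φ p₁ + 2 * δ ≤ ‖p₁ - p₂ - δ • (θ₁ + θ₂)‖ := by
    have h := (abs_le.mp (hφ (p₂ + δ • θ₂) (p₁ - δ • θ₁))).2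
    rw [h2p, h1m, ← norm_neg, show -(p₂ + δ • θ₂ - (p₁ - δ • θ₁)) = p₁ - p₂ - δ • (θ₁ + θ₂) by
      rw [smul_add]; abel] at h
    linarith
  linarith

variable [NormedAddCommGroup E] [InnerProductSpace ℝ E]

theorem norm_add_add_norm_sub_sq_le (a s : E) :
    (‖a + s‖ + ‖a - s‖) ^ 2 ≤ 4 * (‖a‖ ^ 2 + ‖s‖ ^ 2) := by
  have parallelogram := parallelogram_law_with_norm ℝ a s
  nlinarith [sq_nonneg (‖a + s‖ - ‖a - s‖)]

theorem norm_add_sq_add_norm_sub_sq_of_norm_eq_one {x y : E} (hx : ‖x‖ = 1) (hy : ‖y‖ = 1) :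
    ‖x + y‖ ^ 2 + ‖x - y‖ ^ 2 = 4 := by
  rw [norm_add_sq_real, norm_sub_sq_real, hx, hy]; ring

theorem mul_norm_sub_le_norm_sub_of_rays {φ : E → ℝ} (hφ : ∀ x y : E, |φ x - φ y| ≤ ‖x - y‖)
    {δ : ℝ} (hδ : 0 ≤ δ) {p₁ p₂ θ₁ θ₂ : E} (hθ₁ : ‖θ₁‖ = 1) (hθ₂ : ‖θ₂‖ = 1)
    (h1p : φ (p₁ + δ • θ₁) = φ p₁ + δ) (h1m : φ (p₁ - δ • θ₁) = φ p₁ - δ)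
    (h2p : φ (p₂ + δ • θ₂) = φ p₂ + δ) (h2m : φ (p₂ - δ • θ₂) = φ p₂ - δ) :
    δ * ‖θ₁ - θ₂‖ ≤ ‖p₁ - p₂‖ := by
  have lower := four_mul_le_norm_add_add_norm_sub_of_rays hφ h1p h1m h2p h2m
  have upper := norm_add_add_norm_sub_sq_le (p₁ - p₂) (δ • (θ₁ + θ₂))
  have unit := norm_add_sq_add_norm_sub_sq_of_norm_eq_one hθ₁ hθ₂
  rw [norm_smul, mul_pow, Real.norm_eq_abs, sq_abs] at upper
  have sq_le : (δ * ‖θ₁ - θ₂‖) ^ 2 ≤ ‖p₁ - p₂‖ ^ 2 := by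
    nlinarith [pow_le_pow_left₀ (by positivity : 0 ≤ 4 * δ) lower 2]
  exact le_of_sq_le_sq sq_le (norm_nonneg _)

end RayDirections

local notation "ℝ³" => EuclideanSpace ℝ (Fin 3)

theorem stmt_1 (φ : ℝ³ → ℝ) (hφ : ∀ x y : ℝ³, |φ x - φ y| ≤ ‖x - y‖)
    (δ : ℝ) (hδ : 0 < δ) (p₁ p₂ θ₁ θ₂ : ℝ³)
    (hθ₁ : ‖θ₁‖ = 1) (hθ₂ : ‖θ₂‖ = 1)
    (h1p : φ (p₁ + δ • θ₁) = φ p₁ + δ) (h1m : φ (p₁ - δ • θ₁) = φ p₁ - δ)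
    (h2p : φ (p₂ + δ • θ₂) = φ p₂ + δ) (h2m : φ (p₂ - δ • θ₂) = φ p₂ - δ) :
    ‖θ₁ - θ₂‖ ≤ (1 / δ) * ‖p₁ - p₂‖ := by
  rw [one_div_mul_eq_div, le_div_iff₀ hδ, mul_comm]
  exact mul_norm_sub_le_norm_sub_of_rays hφ hδ.le hθ₁ hθ₂ h1p h1m h2p h2m
end

section
/- Let A be a real symmetric 3×3 matrix and let θ ∈ ℝ³ be a unit vector with A·θ = 0. Then for all vectors w₁, w₂ ∈ ℝ³ and all t ∈ ℝ, the determinant of the 3×3 matrix whose columns are w₁ + t·A·w₁, w₂ + t·A·w₂ and θ equals (1 + t·tr A + t²·tr(cof A)) · ⟪w₁ × w₂, θ⟫, where w₁ × w₂ is the cross product. In particular this is the Jacobian identity JΨ(p,t) = (θ·ν)(1 + t·tr Dθ + t²·tr(cof Dθ)) for the ray parametrization Ψ(p,t) = p + t·θ(p). -/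
/-!
Since `A θ = 0`, the three columns are the images of `w₁, w₂, θ` under `1 + t • A`, so the
determinant factors as `det (1 + t • A) · det [w₁ w₂ θ]`, and the second factor is the triple
product `(w₁ × w₂) · θ`. Expanding, `det (1 + t • A) = 1 + t tr A + t² tr (adj A) + t³ det A`;
the cubic term drops out because `det A · det [w₁ w₂ θ]` is the determinant of a matrix with
the zero vector `A θ` as a column.
-/

open Matrix

/-- The cofactor matrix of a 3×3 real matrix: the transpose of the adjugate. -/
def cof (A : Matrix (Fin 3) (Fin 3) ℝ) : Matrix (Fin 3) (Fin 3) ℝ :=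
  (Matrix.adjugate A)ᵀ

namespace Matrix

variable {R : Type*} [CommRing R]

theorem det_one_add_smul_fin_three (A : Matrix (Fin 3) (Fin 3) R) (t : R) :
    (1 + t • A).det = 1 + t * A.trace + t ^ 2 * A.adjugate.trace + t ^ 3 * A.det := by
  simp only [det_fin_three, trace_fin_three, adjugate_fin_three, add_apply, smul_apply,
    smul_eq_mul, one_apply_eq, one_apply_ne, ne_eq, Fin.reduceEq, not_false_eq_true, of_apply,
    cons_val', cons_val_zero, cons_val_one, cons_val, cons_val_fin_one]
  ring

theorem of_mulVec_eq_mul_transpose {n : Type*} [Fintype n] (B : Matrix n n R)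
    (v : n → n → R) : (of fun i => B *ᵥ v i) = of v * Bᵀ := by
  ext i j
  rw [mul_apply_eq_vecMul, vecMul_transpose]
  rfl

theorem det_of_mulVec {n : Type*} [Fintype n] [DecidableEq n] (B : Matrix n n R)
    (v : n → n → R) : (of fun i => B *ᵥ v i).det = B.det * (of v).det := by
  rw [of_mulVec_eq_mul_transpose, det_mul, det_transpose, mul_comm]

theorem det_of_fin_three_eq_cross_dotProduct (u v w : Fin 3 → R) :
    (of ![u, v, w]).det = u ⨯₃ v ⬝ᵥ w := by
  rw [dotProduct_comm, triple_product_permutation, triple_product_eq_det]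
  rfl

end Matrix

theorem stmt_4_general (A : Matrix (Fin 3) (Fin 3) ℝ)
    (θ : Fin 3 → ℝ) (hAθ : A.mulVec θ = 0)
    (w₁ w₂ : Fin 3 → ℝ) (t : ℝ) :
    ((Matrix.of ![w₁ + t • A.mulVec w₁, w₂ + t • A.mulVec w₂, θ])ᵀ).det
      = (1 + t * A.trace + t ^ 2 * (cof A).trace) * (crossProduct w₁ w₂ ⬝ᵥ θ) := by
  have hcols : ![w₁ + t • A *ᵥ w₁, w₂ + t • A *ᵥ w₂, θ]
      = fun i => (1 + t • A) *ᵥ ![w₁, w₂, θ] i := by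
    ext i : 1
    fin_cases i <;> simp [add_mulVec, smul_mulVec, hAθ]
  have hcubic : A.det * (of ![w₁, w₂, θ]).det = 0 := by
    rw [← det_of_mulVec]
    exact det_eq_zero_of_row_eq_zero 2 fun j => by simp [hAθ]
  rw [det_transpose, hcols, det_of_mulVec, det_one_add_smul_fin_three, cof, trace_transpose,
    ← det_of_fin_three_eq_cross_dotProduct]
  linear_combination t ^ 3 * hcubic

theorem stmt_4 (A : Matrix (Fin 3) (Fin 3) ℝ) (hA : A.IsSymm)
    (θ : Fin 3 → ℝ) (hθ : θ ⬝ᵥ θ = 1) (hAθ : A.mulVec θ = 0)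
    (w₁ w₂ : Fin 3 → ℝ) (t : ℝ) :
    ((Matrix.of ![w₁ + t • A.mulVec w₁, w₂ + t • A.mulVec w₂, θ])ᵀ).det
      = (1 + t * A.trace + t ^ 2 * (cof A).trace) * (crossProduct w₁ w₂ ⬝ᵥ θ) :=
  stmt_4_general A θ hAθ w₁ w₂ t
end

section
/- Let ε > 0, c > 0 and λ, μ ∈ ℝ, define 𝔪 : ℝ → ℝ by 𝔪(t) = (c/ε)(t + ((λ+μ)/2)t² + (λμ/3)t³), and let J ⊆ ℝ be an open interval with 0 ∈ J such that (1 + tλ)(1 + tμ) > 0 for all t ∈ J. Let 𝔱 : 𝔪(J) → ℝ be the inverse function of the restriction of 𝔪 to J. Then the third derivative 𝔱''' is a convex function on the open interval 𝔪(J). -/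
/-!
Put `Q = 𝔪' = (c/ε)(1 + tλ)(1 + tμ)`, a quadratic `αt² + βt + γ` with discriminant
`Δ = (c/ε)²(λ - μ)² ≥ 0`. Since `𝔱' = 1/Q(𝔱)`, every further derivative of `𝔱` is `G ∘ 𝔱`, where
`G` is obtained by iterating `G ↦ G'/Q` on `1/Q`. With `D = Q' = 2αt + β` and
`Δ = D² - 4αQ` this gives `𝔱'''' = G₄ ∘ 𝔱` with `G₄ = -5D(2D² + Δ)/Q⁷`, and
`G₄' = 5(22D⁴ + 19ΔD² + Δ²)/(2Q⁸) ≥ 0`. So `G₄` increases on `J`, `𝔱` increases on `𝔪(J)`, hence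
`𝔱''''` increases on the interval `𝔪(J)` and `𝔱'''` is convex there.
-/

open Set

noncomputable section

def quadratic (α β γ t : ℝ) : ℝ := α * t ^ 2 + β * t + γ

/-- `quadInvDerivₙ α β γ ∘ 𝔱` is the `n`-th derivative of any `𝔱` with
`𝔱' = (quadratic α β γ ∘ 𝔱)⁻¹`. -/
def quadInvDeriv₂ (α β γ t : ℝ) : ℝ := -(2 * α * t + β) / quadratic α β γ t ^ 3

def quadInvDeriv₃ (α β γ t : ℝ) : ℝ :=
  (5 * (2 * α * t + β) ^ 2 + discrim α β γ) / (2 * quadratic α β γ t ^ 5)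

def quadInvDeriv₄ (α β γ t : ℝ) : ℝ :=
  -5 * (2 * α * t + β) * (2 * (2 * α * t + β) ^ 2 + discrim α β γ) / quadratic α β γ t ^ 7

end

section Quadratic

variable {α β γ t : ℝ}

theorem discrim_eq_sq_sub_mul_quadratic (α β γ t : ℝ) :
    discrim α β γ = (2 * α * t + β) ^ 2 - 4 * α * quadratic α β γ t := by
  unfold discrim quadratic
  ring

theorem hasDerivAt_quadratic : HasDerivAt (quadratic α β γ) (2 * α * t + β) t := by
  refine ((((hasDerivAt_pow 2 t).const_mul α).add ((hasDerivAt_id t).const_mul β)).add_const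
    γ).congr_deriv ?_
  ring

theorem hasDerivAt_two_mul_mul_add : HasDerivAt (fun s => 2 * α * s + β) (2 * α) t := by
  simpa using ((hasDerivAt_id t).const_mul (2 * α)).add_const β

theorem hasDerivAt_quadratic_inv (h : quadratic α β γ t ≠ 0) :
    HasDerivAt (fun s => (quadratic α β γ s)⁻¹) (quadInvDeriv₂ α β γ t * quadratic α β γ t) t := by
  refine (hasDerivAt_quadratic.inv h).congr_deriv ?_
  unfold quadInvDeriv₂
  field_simp

theorem hasDerivAt_quadInvDeriv₂ (h : quadratic α β γ t ≠ 0) :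
    HasDerivAt (quadInvDeriv₂ α β γ) (quadInvDeriv₃ α β γ t * quadratic α β γ t) t := by
  refine (hasDerivAt_two_mul_mul_add.fun_neg.fun_div (hasDerivAt_quadratic.fun_pow 3)
    (pow_ne_zero 3 h)).congr_deriv ?_
  rw [quadInvDeriv₃, discrim_eq_sq_sub_mul_quadratic α β γ t]
  field_simp
  ring

theorem hasDerivAt_quadInvDeriv₃ (h : quadratic α β γ t ≠ 0) :
    HasDerivAt (quadInvDeriv₃ α β γ) (quadInvDeriv₄ α β γ t * quadratic α β γ t) t := by
  refine ((((hasDerivAt_two_mul_mul_add.fun_pow 2).const_mul 5).add_const (discrim α β γ)).fun_div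
    ((hasDerivAt_quadratic.fun_pow 5).const_mul 2) (by simp [h])).congr_deriv ?_
  rw [quadInvDeriv₄, discrim_eq_sq_sub_mul_quadratic α β γ t]
  field_simp
  ring

theorem hasDerivAt_quadInvDeriv₄ (h : quadratic α β γ t ≠ 0) :
    HasDerivAt (quadInvDeriv₄ α β γ)
      (5 * (22 * (2 * α * t + β) ^ 4 + 19 * discrim α β γ * (2 * α * t + β) ^ 2
        + discrim α β γ ^ 2) / (2 * quadratic α β γ t ^ 8)) t := by
  refine (((hasDerivAt_two_mul_mul_add.const_mul (-5)).fun_mul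
    (((hasDerivAt_two_mul_mul_add.fun_pow 2).const_mul 2).add_const (discrim α β γ))).fun_div
    (hasDerivAt_quadratic.fun_pow 7) (pow_ne_zero 7 h)).congr_deriv ?_
  rw [discrim_eq_sq_sub_mul_quadratic α β γ t]
  field_simp
  ring

theorem monotoneOn_quadInvDeriv₄ {J : Set ℝ} (hJ : Convex ℝ J)
    (hQ : ∀ t ∈ J, 0 < quadratic α β γ t) (hΔ : 0 ≤ discrim α β γ) :
    MonotoneOn (quadInvDeriv₄ α β γ) J := by
  have hderiv : ∀ t ∈ J, HasDerivAt (quadInvDeriv₄ α β γ) _ t :=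
    fun t ht => hasDerivAt_quadInvDeriv₄ (hQ t ht).ne'
  refine monotoneOn_of_hasDerivWithinAt_nonneg hJ
    (fun t ht => (hderiv t ht).continuousAt.continuousWithinAt)
    (fun t ht => (hderiv t (interior_subset ht)).hasDerivWithinAt) fun t ht => ?_
  have := hQ t (interior_subset ht)
  positivity

end Quadratic

section InverseFunction

variable {f f' g : ℝ → ℝ}

theorem strictMonoOn_Icc_of_hasDerivAt_pos {a b : ℝ} (hf : ∀ t, HasDerivAt f (f' t) t)
    (hpos : ∀ t ∈ Ioo a b, 0 < f' t) : StrictMonoOn f (Icc a b) := by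
  refine strictMonoOn_of_deriv_pos (convex_Icc a b)
    (fun t _ => (hf t).continuousAt.continuousWithinAt) fun t ht => ?_
  rw [interior_Icc] at ht
  rw [(hf t).deriv]
  exact hpos t ht

theorem StrictMonoOn.strictMonoOn_image_of_leftInvOn {s : Set ℝ} (hf : StrictMonoOn f s)
    (hg : LeftInvOn g f s) : StrictMonoOn g (f '' s) := by
  rintro _ ⟨x, hx, rfl⟩ _ ⟨y, hy, rfl⟩ hxy
  rw [hg hx, hg hy]
  exact (hf.lt_iff_lt hx hy).1 hxy

theorem StrictMonoOn.hasDerivAt_of_leftInvOn {s : Set ℝ} (hf : StrictMonoOn f s) (hs : IsOpen s)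
    (hfs : IsOpen (f '' s)) (hg : LeftInvOn g f s) (hf' : ∀ t ∈ s, HasDerivAt f (f' t) t)
    (h0 : ∀ t ∈ s, f' t ≠ 0) {y : ℝ} (hy : y ∈ f '' s) : HasDerivAt g (f' (g y))⁻¹ y := by
  have hgy : g y ∈ s := hg.mapsTo (surjOn_image f s) hy
  have hcont : ContinuousAt g y :=
    (hf.strictMonoOn_image_of_leftInvOn hg).continuousAt_of_image_mem_nhds (hfs.mem_nhds hy)
      (by rw [hg.image_image]; exact hs.mem_nhds hgy)
  refine (hf' _ hgy).of_local_left_inverse hcont (h0 _ hgy) ?_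
  filter_upwards [hfs.mem_nhds hy] with z hz using hg.rightInvOn_image hz

end InverseFunction

theorem hasDerivAt_iteratedDeriv_succ_of_hasDerivAt_inv {S J : Set ℝ} (hS : IsOpen S)
    {g q G G' : ℝ → ℝ} {n : ℕ} (hgJ : MapsTo g S J) (hg : ∀ y ∈ S, HasDerivAt g (q (g y))⁻¹ y)
    (hq : ∀ t ∈ J, q t ≠ 0) (hG : ∀ t ∈ J, HasDerivAt G (G' t * q t) t)
    (hn : ∀ y ∈ S, HasDerivAt (iteratedDeriv n g) (G (g y)) y) :
    ∀ y ∈ S, HasDerivAt (iteratedDeriv (n + 1) g) (G' (g y)) y := by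
  intro y hy
  rw [iteratedDeriv_succ]
  refine (((hG _ (hgJ hy)).comp y (hg y hy)).congr_deriv ?_).congr_of_eventuallyEq ?_
  · field_simp [hq _ (hgJ hy)]
  · filter_upwards [hS.mem_nhds hy] with z hz using (hn z hz).deriv

theorem convexOn_iteratedDeriv_three_of_hasDerivAt_inv_quadratic {α β γ : ℝ} {S J : Set ℝ}
    (hS : IsOpen S) (hSc : Convex ℝ S) (hJ : Convex ℝ J) {g : ℝ → ℝ} (hgJ : MapsTo g S J)
    (hmono : MonotoneOn g S) (hQ : ∀ t ∈ J, 0 < quadratic α β γ t) (hΔ : 0 ≤ discrim α β γ)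
    (hg : ∀ y ∈ S, HasDerivAt g (quadratic α β γ (g y))⁻¹ y) :
    ConvexOn ℝ S (iteratedDeriv 3 g) := by
  have hQ0 : ∀ t ∈ J, quadratic α β γ t ≠ 0 := fun t ht => (hQ t ht).ne'
  have step {n : ℕ} {G G' : ℝ → ℝ} (hG : ∀ t ∈ J, HasDerivAt G (G' t * quadratic α β γ t) t) :=
    hasDerivAt_iteratedDeriv_succ_of_hasDerivAt_inv (n := n) hS hgJ hg hQ0 hG
  have h3 : ∀ y ∈ S, HasDerivAt (iteratedDeriv 3 g) (quadInvDeriv₄ α β γ (g y)) y :=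
    step (fun t ht => hasDerivAt_quadInvDeriv₃ (hQ0 t ht)) <|
      step (fun t ht => hasDerivAt_quadInvDeriv₂ (hQ0 t ht)) <|
        step (fun t ht => hasDerivAt_quadratic_inv (hQ0 t ht)) <| by simpa using hg
  refine MonotoneOn.convexOn_of_deriv hSc (fun y hy => (h3 y hy).continuousAt.continuousWithinAt)
    ?_ ?_ <;> rw [hS.interior_eq]
  · exact fun y hy => (h3 y hy).differentiableAt.differentiableWithinAt
  · exact ((monotoneOn_quadInvDeriv₄ hJ hQ hΔ).comp hmono hgJ).congr fun y hy => (h3 y hy).deriv.symm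

theorem stmt_6 (ε c : ℝ) (hε : 0 < ε) (hc : 0 < c) (lam mu : ℝ)
    (𝔪 : ℝ → ℝ)
    (h𝔪 : ∀ t : ℝ, 𝔪 t = (c / ε) * (t + ((lam + mu) / 2) * t ^ 2 + (lam * mu / 3) * t ^ 3))
    (a b : ℝ) (ha : a < 0) (hb : 0 < b)
    (hJ : ∀ t ∈ Set.Ioo a b, 0 < (1 + t * lam) * (1 + t * mu))
    (𝔱 : ℝ → ℝ) (h𝔱 : Set.InvOn 𝔱 𝔪 (Set.Ioo a b) (𝔪 '' Set.Ioo a b)) :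
    ConvexOn ℝ (𝔪 '' Set.Ioo a b) (iteratedDeriv 3 𝔱) := by
  set k := c / ε
  have hk : 0 < k := div_pos hc hε
  have hQ_eq (t : ℝ) :
      quadratic (k * (lam * mu)) (k * (lam + mu)) k t = k * ((1 + t * lam) * (1 + t * mu)) := by
    unfold quadratic
    ring
  have h𝔪' (t : ℝ) : HasDerivAt 𝔪 (quadratic (k * (lam * mu)) (k * (lam + mu)) k t) t := by
    rw [funext h𝔪, hQ_eq]
    refine ((((hasDerivAt_id t).add ((hasDerivAt_pow 2 t).const_mul _)).add
      ((hasDerivAt_pow 3 t).const_mul _)).const_mul k).congr_deriv ?_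
    ring
  have hQ (t : ℝ) (ht : t ∈ Ioo a b) : 0 < quadratic (k * (lam * mu)) (k * (lam + mu)) k t := by
    rw [hQ_eq]
    exact mul_pos hk (hJ t ht)
  have hΔ : 0 ≤ discrim (k * (lam * mu)) (k * (lam + mu)) k := by
    rw [show discrim _ _ _ = (k * (lam - mu)) ^ 2 by unfold discrim; ring]
    positivity
  have h𝔪mono := strictMonoOn_Icc_of_hasDerivAt_pos h𝔪' hQ
  have himage : 𝔪 '' Ioo a b = Ioo (𝔪 a) (𝔪 b) :=
    ContinuousOn.image_Ioo_of_strictMonoOn (ha.trans hb).le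
      (fun t _ => (h𝔪' t).continuousAt.continuousWithinAt) h𝔪mono
  have hopen : IsOpen (𝔪 '' Ioo a b) := himage ▸ isOpen_Ioo
  replace h𝔪mono := h𝔪mono.mono Ioo_subset_Icc_self
  exact convexOn_iteratedDeriv_three_of_hasDerivAt_inv_quadratic hopen (himage ▸ convex_Ioo _ _)
    (convex_Ioo a b) (h𝔱.1.mapsTo (surjOn_image _ _))
    (h𝔪mono.strictMonoOn_image_of_leftInvOn h𝔱.1).monotoneOn hQ hΔ fun y hy =>
      h𝔪mono.hasDerivAt_of_leftInvOn isOpen_Ioo hopen h𝔱.1 (fun t _ => h𝔪' t)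
        (fun t ht => (hQ t ht).ne') hy
end

section
/- Let φ : ℝ³ → ℝ be 1-Lipschitz, let a, b ∈ ℝ³ with a ≠ b and φ(a) − φ(b) = ‖a − b‖, let s ∈ (0,1) and set z = a + s·(b − a). Then φ is differentiable at z and its gradient at z equals (a − b)/‖a − b‖. -/
/-!
The 1-Lipschitz bound squeezes `φ` between the downward cone `y ↦ φ a - ‖y - a‖` and the upward
cone `y ↦ φ b + ‖y - b‖`. The slope condition makes the two cones meet at every point `z` strictly
between `a` and `b`, where both are differentiable with gradient the unit vector `(a - b) / ‖a - b‖`;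
a function squeezed between two functions that touch at a point with a common derivative has that
derivative there.
-/

local notation "ℝ³" => EuclideanSpace ℝ (Fin 3)

open Asymptotics Filter NormedSpace Set Topology

section Squeeze

variable {E : Type*} [NormedAddCommGroup E] [NormedSpace ℝ E] {f g h : E → ℝ}
  {f' : E →L[ℝ] ℝ} {x : E}

theorem HasFDerivAt.of_eventually_le_of_le (hg : HasFDerivAt g f' x) (hh : HasFDerivAt h f' x)
    (hgf : ∀ᶠ y in 𝓝 x, g y ≤ f y) (hfh : ∀ᶠ y in 𝓝 x, f y ≤ h y) (hgh : g x = h x) :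
    HasFDerivAt f f' x := by
  have hfg : f x = g x := le_antisymm (hgh ▸ hfh.self_of_nhds) hgf.self_of_nhds
  refine .of_isLittleO <|
    (IsBigO.of_bound' ?_).trans_isLittleO (hg.isLittleO.norm_left.add hh.isLittleO.norm_left)
  filter_upwards [hgf, hfh] with y hgy hfy
  have hsandwich := abs_le_max_abs_abs (a := g y - g x - f' (y - x))
    (b := f y - f x - f' (y - x)) (c := h y - h x - f' (y - x)) (by linarith) (by linarith)
  simp only [Real.norm_eq_abs]
  exact hsandwich.trans <| (max_le_add_of_nonneg (abs_nonneg _) (abs_nonneg _)).trans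
    (le_abs_self _)

end Squeeze

section Cone

variable {F : Type*} [NormedAddCommGroup F] [InnerProductSpace ℝ F]

theorem hasFDerivAt_norm {x : F} (hx : x ≠ 0) :
    HasFDerivAt (‖·‖) (innerSL ℝ (normalize x)) x := by
  have hsq : ‖x‖ ^ 2 ≠ 0 := by positivity
  have := (hasStrictFDerivAt_norm_sq x).hasFDerivAt.sqrt hsq
  simp only [Real.sqrt_sq (norm_nonneg _)] at this
  refine this.congr_fderiv ?_
  ext y
  simp [NormedSpace.normalize]
  field_simp

theorem hasFDerivAt_norm_sub {x p : F} (hx : x ≠ p) :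
    HasFDerivAt (‖· - p‖) (innerSL ℝ (normalize (x - p))) x := by
  exact (hasFDerivAt_norm (sub_ne_zero.2 hx)).comp x ((hasFDerivAt_id x).sub_const p)

end Cone

section Ray

variable {F : Type*} [NormedAddCommGroup F] [InnerProductSpace ℝ F] [CompleteSpace F]
  {φ : F → ℝ} {a b : F}

theorem LipschitzWith.hasGradientAt_of_sub_eq_norm (hφ : LipschitzWith 1 φ) (hab : a ≠ b)
    (hslope : φ a - φ b = ‖a - b‖) {s : ℝ} (hs : s ∈ Ioo (0 : ℝ) 1) :
    HasGradientAt φ (normalize (a - b)) (a + s • (b - a)) := by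
  obtain ⟨hs0, hs1⟩ := hs
  set z := a + s • (b - a)
  have haz : a - z = s • (a - b) := by simp only [z]; module
  have hzb : z - b = (1 - s) • (a - b) := by simp only [z]; module
  have hab' : a - b ≠ 0 := sub_ne_zero.2 hab
  have hlower : ∀ y, φ a - ‖y - a‖ ≤ φ y := fun y => by
    simpa [dist_eq_norm, norm_sub_rev a y] using hφ.le_add_mul a y
  have hupper : ∀ y, φ y ≤ φ b + ‖y - b‖ := fun y => by
    simpa [dist_eq_norm] using hφ.le_add_mul y b
  have htouch : φ a - ‖z - a‖ = φ b + ‖z - b‖ := by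
    rw [norm_sub_rev, haz, hzb, norm_smul, norm_smul, Real.norm_of_nonneg hs0.le,
      Real.norm_of_nonneg (by linarith)]
    linarith
  have hlower' : HasFDerivAt (fun y => φ a - ‖y - a‖) (innerSL ℝ (normalize (a - b))) z := by
    have hza : z ≠ a := (sub_ne_zero.1 (haz ▸ smul_ne_zero hs0.ne' hab')).symm
    have := (hasFDerivAt_norm_sub hza).const_sub (φ a)
    rwa [← map_neg, ← normalize_neg, neg_sub, haz, normalize_smul_of_pos hs0] at this
  have hupper' : HasFDerivAt (fun y => φ b + ‖y - b‖) (innerSL ℝ (normalize (a - b))) z := by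
    have hzb' : z ≠ b := sub_ne_zero.1 (hzb ▸ smul_ne_zero (by linarith) hab')
    have := (hasFDerivAt_norm_sub hzb').const_add (φ b)
    rwa [hzb, normalize_smul_of_pos (by linarith)] at this
  exact hasGradientAt_iff_hasFDerivAt.2 <| .of_eventually_le_of_le hlower' hupper'
    (.of_forall hlower) (.of_forall hupper) htouch

end Ray

theorem stmt_9 (φ : ℝ³ → ℝ) (hφ : ∀ x y : ℝ³, |φ x - φ y| ≤ ‖x - y‖)
    (a b : ℝ³) (hab : a ≠ b) (hslope : φ a - φ b = ‖a - b‖)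
    (s : ℝ) (hs : s ∈ Set.Ioo (0 : ℝ) 1) (z : ℝ³) (hz : z = a + s • (b - a)) :
    DifferentiableAt ℝ φ z ∧ gradient φ z = ‖a - b‖⁻¹ • (a - b) := by
  have hlip : LipschitzWith 1 φ :=
    .of_le_add fun x y => by linarith [le_abs_self (φ x - φ y), hφ x y, dist_eq_norm x y]
  subst hz
  have h := hlip.hasGradientAt_of_sub_eq_norm hab hslope hs
  exact ⟨h.differentiableAt, h.gradient⟩
end

section
/- Let u, v : ℝ³ → [0,∞) be integrable functions that vanish almost everywhere outside some compact set and satisfy ∫ u dx = ∫ v dx = 1. Then there exists a 1-Lipschitz function φ : ℝ³ → ℝ such that for every 1-Lipschitz function ψ : ℝ³ → ℝ, ∫ ψ(x)(u(x) − v(x)) dx ≤ ∫ φ(x)(u(x) − v(x)) dx. -/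
/-!
On a metric space, the `L`-Lipschitz functions vanishing at a base point form an equicontinuous,
pointwise bounded family, hence (Arzelà–Ascoli) a compact set in the compact-open topology. Pairing
with a function `f` that is integrable and vanishes off a compact set is continuous for that
topology, so `ψ ↦ ∫ ψ f` attains its maximum on this set. When `∫ f = 0`, shifting `ψ` by a
constant does not change `∫ ψ f`, so the maximum is a maximum over all `L`-Lipschitz functions.
Here `f = u - v`.
-/

open MeasureTheory

local notation "ℝ³" => EuclideanSpace ℝ (Fin 3)

open Filter Topology
open scoped NNReal

section CompactlySupportedPairing

variable {X : Type*} [TopologicalSpace X] [T2Space X] [MeasurableSpace X] [OpensMeasurableSpace X]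
  {μ : Measure X} {f : X → ℝ} {K : Set X}

theorem MeasureTheory.Integrable.continuous_mul_of_ae_eq_zero_off_compact (hf : Integrable f μ)
    (hK : IsCompact K) (hfK : ∀ᵐ x ∂μ, x ∉ K → f x = 0) (ψ : C(X, ℝ)) :
    Integrable (fun x => ψ x * f x) μ :=
  (hf.integrableOn.continuousOn_mul ψ.continuous.continuousOn hK).integrable_of_ae_notMem_eq_zero
    (by filter_upwards [hfK] with x hx hxK using by simp [hx hxK])

theorem continuous_integral_mul_of_ae_eq_zero_off_compact (hf : Integrable f μ)
    (hK : IsCompact K) (hfK : ∀ᵐ x ∂μ, x ∉ K → f x = 0) :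
    Continuous fun ψ : C(X, ℝ) => ∫ x, ψ x * f x ∂μ := by
  have hint := hf.continuous_mul_of_ae_eq_zero_off_compact hK hfK
  refine continuous_iff_continuousAt.2 fun ψ => Metric.tendsto_nhds.2 fun ε hε => ?_
  set A := ∫ x, |f x| ∂μ
  have hA : 0 ≤ A := integral_nonneg fun x => abs_nonneg (f x)
  set δ := ε / (A + 1)
  have hδ : 0 < δ := by positivity
  have hunif : TendstoUniformlyOn (fun (φ : C(X, ℝ)) x => φ x) ψ (𝓝 ψ) K :=
    ContinuousMap.tendsto_iff_forall_isCompact_tendstoUniformlyOn.1 tendsto_id K hK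
  filter_upwards [Metric.tendstoUniformlyOn_iff.1 hunif δ hδ] with φ hφ
  have hbound : ∀ᵐ x ∂μ, ‖φ x * f x - ψ x * f x‖ ≤ δ * |f x| := by
    filter_upwards [hfK] with x hx
    by_cases hxK : x ∈ K
    · rw [← sub_mul, norm_mul, Real.norm_eq_abs, ← Real.dist_eq, dist_comm]
      exact mul_le_mul_of_nonneg_right (hφ x hxK).le (abs_nonneg _)
    · simp [hx hxK]
  rw [Real.dist_eq, ← integral_sub (hint φ) (hint ψ)]
  calc |∫ x, (φ x * f x - ψ x * f x) ∂μ| ≤ ∫ x, δ * |f x| ∂μ :=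
        norm_integral_le_of_norm_le (hf.abs.const_mul δ) hbound
    _ = δ * A := integral_const_mul δ _
    _ < ε := by
        rw [div_mul_eq_mul_div, div_lt_iff₀ (by positivity)]
        nlinarith

end CompactlySupportedPairing

theorem ContinuousMap.isCompact_setOf_lipschitzWith_apply_eq_zero {X : Type*}
    [PseudoMetricSpace X] (L : ℝ≥0) (x₀ : X) :
    IsCompact {ψ : C(X, ℝ) | LipschitzWith L ψ ∧ ψ x₀ = 0} := by
  refine ArzelaAscoli.isCompact_of_equicontinuous _ ?_
    (LipschitzWith.uniformEquicontinuous _ L fun ψ => ψ.2.1).equicontinuous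
  have hbox : IsCompact (Set.univ.pi fun x => Set.Icc (-(L * dist x x₀)) (L * dist x x₀)) :=
    isCompact_univ_pi fun _ => isCompact_Icc
  refine hbox.of_isClosed_subset ?_ ?_
  · have himage : ContinuousMap.toFun '' {ψ : C(X, ℝ) | LipschitzWith L ψ ∧ ψ x₀ = 0} =
        {g : X → ℝ | LipschitzWith L g} ∩ {g | g x₀ = 0} := by
      ext g
      exact ⟨by rintro ⟨ψ, hψ, rfl⟩; exact hψ, fun hg => ⟨⟨g, hg.1.continuous⟩, hg, rfl⟩⟩
    rw [himage]
    exact (isClosed_setOfPred_lipschitzWith L).inter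
      (isClosed_eq (continuous_apply x₀) continuous_const)
  · rintro _ ⟨ψ, ⟨hψ, hψ₀⟩, rfl⟩ x -
    have := hψ.dist_le_mul x x₀
    rw [hψ₀, Real.dist_0_eq_abs] at this
    exact abs_le.1 this

section Kantorovich

variable {X : Type*} [MetricSpace X] [MeasurableSpace X] [OpensMeasurableSpace X]
  {μ : Measure X} {f : X → ℝ} {K : Set X}

theorem exists_isMaxOn_integral_mul_of_lipschitzWith (hf : Integrable f μ) (hK : IsCompact K)
    (hfK : ∀ᵐ x ∂μ, x ∉ K → f x = 0) (L : ℝ≥0) (x₀ : X) :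
    ∃ φ ∈ {ψ : C(X, ℝ) | LipschitzWith L ψ ∧ ψ x₀ = 0},
      IsMaxOn (fun ψ : C(X, ℝ) => ∫ x, ψ x * f x ∂μ) {ψ | LipschitzWith L ψ ∧ ψ x₀ = 0} φ :=
  (ContinuousMap.isCompact_setOf_lipschitzWith_apply_eq_zero L x₀).exists_isMaxOn
    ⟨0, LipschitzWith.const' 0, rfl⟩
    (continuous_integral_mul_of_ae_eq_zero_off_compact hf hK hfK).continuousOn

theorem exists_lipschitzWith_forall_integral_mul_le [Nonempty X] (hf : Integrable f μ)
    (hK : IsCompact K) (hfK : ∀ᵐ x ∂μ, x ∉ K → f x = 0) (hf₀ : ∫ x, f x ∂μ = 0) (L : ℝ≥0) :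
    ∃ φ : X → ℝ, LipschitzWith L φ ∧
      ∀ ψ : X → ℝ, LipschitzWith L ψ → ∫ x, ψ x * f x ∂μ ≤ ∫ x, φ x * f x ∂μ := by
  obtain ⟨x₀⟩ : Nonempty X := inferInstance
  obtain ⟨φ, ⟨hφ, -⟩, hmax⟩ := exists_isMaxOn_integral_mul_of_lipschitzWith hf hK hfK L x₀
  refine ⟨φ, hφ, fun ψ hψ => ?_⟩
  let ψ₀ : C(X, ℝ) := ⟨fun x => ψ x - ψ x₀, hψ.continuous.sub continuous_const⟩
  have hψ₀ : LipschitzWith L ψ₀ ∧ ψ₀ x₀ = 0 := ⟨LipschitzWith.of_dist_le_mul fun x y =>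
    (dist_sub_right _ _ _).trans_le (hψ.dist_le_mul x y), sub_self _⟩
  have hint : Integrable (fun x => ψ x * f x) μ :=
    hf.continuous_mul_of_ae_eq_zero_off_compact hK hfK ⟨ψ, hψ.continuous⟩
  calc ∫ x, ψ x * f x ∂μ = ∫ x, ψ₀ x * f x ∂μ := by
        simp only [ψ₀, ContinuousMap.coe_mk, sub_mul]
        rw [integral_sub hint (hf.const_mul _), integral_const_mul, hf₀, mul_zero, sub_zero]
    _ ≤ ∫ x, φ x * f x ∂μ := hmax hψ₀

end Kantorovich

theorem stmt_15_general (u v : ℝ³ → ℝ)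
    (hu : Integrable u volume) (hv : Integrable v volume)
    (hucpt : ∃ K : Set ℝ³, IsCompact K ∧ ∀ᵐ x ∂volume, x ∉ K → u x = 0)
    (hvcpt : ∃ K : Set ℝ³, IsCompact K ∧ ∀ᵐ x ∂volume, x ∉ K → v x = 0)
    (huint : ∫ x, u x = 1) (hvint : ∫ x, v x = 1) :
    ∃ φ : ℝ³ → ℝ, (∀ x y : ℝ³, |φ x - φ y| ≤ ‖x - y‖) ∧
      ∀ ψ : ℝ³ → ℝ, (∀ x y : ℝ³, |ψ x - ψ y| ≤ ‖x - y‖) →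
        (∫ x, ψ x * (u x - v x)) ≤ ∫ x, φ x * (u x - v x) := by
  obtain ⟨Ku, hKu, hu_supp⟩ := hucpt
  obtain ⟨Kv, hKv, hv_supp⟩ := hvcpt
  have hsupp : ∀ᵐ x ∂volume, x ∉ Ku ∪ Kv → u x - v x = 0 := by
    filter_upwards [hu_supp, hv_supp] with x hxu hxv hx
    rw [hxu fun h => hx (Or.inl h), hxv fun h => hx (Or.inr h), sub_self]
  have hmass : ∫ x, (u x - v x) = 0 := by rw [integral_sub hu hv, huint, hvint, sub_self]
  have hlip (φ : ℝ³ → ℝ) : LipschitzWith 1 φ ↔ ∀ x y, |φ x - φ y| ≤ ‖x - y‖ := by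
    simp only [lipschitzWith_iff_dist_le_mul, NNReal.coe_one, one_mul, dist_eq_norm,
      Real.norm_eq_abs]
  obtain ⟨φ, hφ, hmax⟩ :=
    exists_lipschitzWith_forall_integral_mul_le (hu.sub hv) (hKu.union hKv) hsupp hmass 1
  exact ⟨φ, (hlip φ).1 hφ, fun ψ hψ => hmax ψ ((hlip ψ).2 hψ)⟩

theorem stmt_15 (u v : ℝ³ → ℝ) (hu0 : ∀ x, 0 ≤ u x) (hv0 : ∀ x, 0 ≤ v x)
    (hu : Integrable u volume) (hv : Integrable v volume)
    (hucpt : ∃ K : Set ℝ³, IsCompact K ∧ ∀ᵐ x ∂volume, x ∉ K → u x = 0)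
    (hvcpt : ∃ K : Set ℝ³, IsCompact K ∧ ∀ᵐ x ∂volume, x ∉ K → v x = 0)
    (huint : ∫ x, u x = 1) (hvint : ∫ x, v x = 1) :
    ∃ φ : ℝ³ → ℝ, (∀ x y : ℝ³, |φ x - φ y| ≤ ‖x - y‖) ∧
      ∀ ψ : ℝ³ → ℝ, (∀ x y : ℝ³, |ψ x - ψ y| ≤ ‖x - y‖) →
        (∫ x, ψ x * (u x - v x)) ≤ ∫ x, φ x * (u x - v x) :=
  stmt_15_general u v hu hv hucpt hvcpt huint hvint
end
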